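/- arXiv:2603.16409 — 2 statements merged into one kernel-verified Lean document; each statement's English description precedes it below -/
import Mathlib

section
/- Let T > 0 and let f: (0,T] → [0,∞] be measurable with f ∈ L⁴(0,T). Let A > 0 and define F(t) := (1/t)∫₀^t f(s) e^{A|ln(t/s)|^{1/2}} ds for t ∈ (0,T]. Then F ∈ L⁴(0,T) and ‖F‖_{L⁴(0,T)} ≤ C_A ‖f‖_{L⁴(0,T)}, where C_A > 0 is a constant depending only on A. -/
/-!
By AM–GM, `A √(log x) ≤ 3 A² + (log x) / 12`, so the kernel is at most `e^{3A²} (t/s)^{1/12}` and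
it suffices to bound the Hardy-type operator `t⁻¹ ∫₀ᵗ f(s) (t/s)^α ds` on `Lᵖ` for
`α < 1 - 1/p`. Hölder's inequality against the weight `(t/s)^β`, whose integral over `(0, t]` is
`t / (1 - β)`, bounds its `p`-th power by `(1 - β)^{1-p} t⁻¹ ∫₀ᵗ f(s)^p (s/t)^γ ds` with
`γ = β (p - 1) - α p > 0`; integrating in `t` and exchanging the order of integration leaves
`∫ₛ^∞ t⁻¹ (s/t)^γ dt = 1/γ`.
-/

open MeasureTheory Set
open scoped ENNReal

theorem ENNReal.lintegral_rpow_le_lintegral_mul_rpow {α : Type*} [MeasurableSpace α]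
    {μ : Measure α} {p : ℝ} (hp : 1 < p) {g w : α → ℝ≥0∞} (hg : AEMeasurable g μ)
    (hw : AEMeasurable w μ) (hw_pos : ∀ᵐ x ∂μ, w x ≠ 0) (hw_fin : ∀ᵐ x ∂μ, w x ≠ ⊤) :
    (∫⁻ x, g x ∂μ) ^ p ≤ (∫⁻ x, g x ^ p * w x ^ (1 - p) ∂μ) * (∫⁻ x, w x ∂μ) ^ (p - 1) := by
  have hp0 : 0 < p := zero_lt_one.trans hp
  have hsplit : ∀ᵐ x ∂μ, g x = (g x ^ p * w x ^ (1 - p)) ^ p⁻¹ * w x ^ (1 - p⁻¹) := by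
    filter_upwards [hw_pos, hw_fin] with x hx0 hxtop
    rw [ENNReal.mul_rpow_of_nonneg _ _ (inv_nonneg.2 hp0.le), ← ENNReal.rpow_mul,
      ← ENNReal.rpow_mul, mul_assoc, ← ENNReal.rpow_add _ _ hx0 hxtop,
      mul_inv_cancel₀ hp0.ne', ENNReal.rpow_one,
      show (1 - p) * p⁻¹ + (1 - p⁻¹) = 0 by field_simp; ring, ENNReal.rpow_zero, mul_one]
  have holder := ENNReal.lintegral_mul_norm_pow_le (μ := μ)
    (f := fun x => g x ^ p * w x ^ (1 - p))
    ((hg.pow_const p).mul (hw.pow_const (1 - p))) hw (inv_nonneg.2 hp0.le)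
    (sub_nonneg.2 (inv_le_one_of_one_le₀ hp.le)) (add_sub_cancel _ _)
  rw [← lintegral_congr_ae hsplit] at holder
  calc (∫⁻ x, g x ∂μ) ^ p
      ≤ ((∫⁻ x, g x ^ p * w x ^ (1 - p) ∂μ) ^ p⁻¹ * (∫⁻ x, w x ∂μ) ^ (1 - p⁻¹)) ^ p :=
        ENNReal.rpow_le_rpow holder hp0.le
    _ = _ := by
      rw [ENNReal.mul_rpow_of_nonneg _ _ hp0.le, ← ENNReal.rpow_mul, ← ENNReal.rpow_mul,
        inv_mul_cancel₀ hp0.ne', ENNReal.rpow_one, sub_mul, one_mul, inv_mul_cancel₀ hp0.ne']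

theorem lintegral_Ioc_div_rpow {t β : ℝ} (ht : 0 < t) (hβ : β < 1) :
    ∫⁻ s in Ioc 0 t, ENNReal.ofReal ((t / s) ^ β) = ENNReal.ofReal (t / (1 - β)) := by
  have hint : IntegrableOn (fun s : ℝ => s ^ (-β)) (Ioc 0 t) := by
    rw [← uIoc_of_le ht.le]
    exact (intervalIntegral.intervalIntegrable_rpow' (by linarith)).def'
  have hsplit : ∀ s ∈ Ioc 0 t, ENNReal.ofReal ((t / s) ^ β)
      = ENNReal.ofReal (t ^ β) * ENNReal.ofReal (s ^ (-β)) := fun s hs => by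
    rw [← ENNReal.ofReal_mul (by positivity), Real.div_rpow ht.le hs.1.le,
      Real.rpow_neg hs.1.le, div_eq_mul_inv]
  rw [setLIntegral_congr_fun measurableSet_Ioc hsplit, lintegral_const_mul _ (by fun_prop),
    ← ofReal_integral_eq_lintegral_ofReal hint
      ((ae_restrict_mem measurableSet_Ioc).mono fun s hs => Real.rpow_nonneg hs.1.le _),
    ← ENNReal.ofReal_mul (by positivity), ← intervalIntegral.integral_of_le ht.le,
    integral_rpow (Or.inl (by linarith)), Real.zero_rpow (by linarith), sub_zero,
    mul_div_assoc', ← Real.rpow_add ht, add_neg_cancel_left, Real.rpow_one, neg_add_eq_sub]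

theorem lintegral_Ioi_inv_mul_div_rpow {s γ : ℝ} (hs : 0 < s) (hγ : 0 < γ) :
    ∫⁻ t in Ioi s, ENNReal.ofReal (t⁻¹ * (s / t) ^ γ) = ENNReal.ofReal γ⁻¹ := by
  have hsplit : ∀ t ∈ Ioi s, ENNReal.ofReal (t⁻¹ * (s / t) ^ γ)
      = ENNReal.ofReal (s ^ γ) * ENNReal.ofReal (t ^ (-γ - 1)) := fun t ht => by
    have ht0 : 0 < t := hs.trans ht
    rw [← ENNReal.ofReal_mul (by positivity), Real.div_rpow hs.le ht0.le,
      Real.rpow_sub_one ht0.ne', Real.rpow_neg ht0.le]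
    congr 1
    ring
  rw [setLIntegral_congr_fun measurableSet_Ioi hsplit, lintegral_const_mul _ (by fun_prop),
    ← ofReal_integral_eq_lintegral_ofReal (integrableOn_Ioi_rpow_of_lt (by linarith) hs)
      ((ae_restrict_mem measurableSet_Ioi).mono fun t ht => by
        have : 0 < t := hs.trans ht
        positivity),
    ← ENNReal.ofReal_mul (by positivity), integral_Ioi_rpow_of_lt (by linarith) hs,
    sub_add_cancel, Real.rpow_neg hs.le]
  field_simp

theorem inv_mul_lintegral_Ioc_rpow_le {p α β t : ℝ} (hp : 1 < p) (hβ : β < 1) (ht : 0 < t)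
    {f : ℝ → ℝ≥0∞} (hf : Measurable f) :
    ((ENNReal.ofReal t)⁻¹ * ∫⁻ s in Ioc 0 t, f s * ENNReal.ofReal ((t / s) ^ α)) ^ p ≤
      ENNReal.ofReal ((1 - β) ^ (1 - p)) *
        ∫⁻ s in Ioc 0 t, f s ^ p * ENNReal.ofReal (t⁻¹ * (s / t) ^ (β * (p - 1) - α * p)) := by
  have hp0 : 0 < p := zero_lt_one.trans hp
  have hw_pos : ∀ᵐ s ∂volume.restrict (Ioc 0 t), ENNReal.ofReal ((t / s) ^ β) ≠ 0 :=
    (ae_restrict_mem measurableSet_Ioc).mono fun s hs =>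
      (ENNReal.ofReal_pos.2 (Real.rpow_pos_of_pos (div_pos ht hs.1) _)).ne'
  have holder := ENNReal.lintegral_rpow_le_lintegral_mul_rpow hp
    (g := fun s => f s * ENNReal.ofReal ((t / s) ^ α)) (by fun_prop) (by fun_prop) hw_pos
    (ae_of_all _ fun _ => ENNReal.ofReal_ne_top)
  have integrand_eq : ∀ s ∈ Ioc 0 t,
      (f s * ENNReal.ofReal ((t / s) ^ α)) ^ p * ENNReal.ofReal ((t / s) ^ β) ^ (1 - p)
        = f s ^ p * ENNReal.ofReal ((s / t) ^ (β * (p - 1) - α * p)) := fun s hs => by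
    have hts : 0 < t / s := div_pos ht hs.1
    have hst : 0 < s / t := div_pos hs.1 ht
    rw [ENNReal.mul_rpow_of_nonneg _ _ hp0.le, ENNReal.ofReal_rpow_of_pos (by positivity),
      ENNReal.ofReal_rpow_of_pos (by positivity), mul_assoc,
      ← ENNReal.ofReal_mul (by positivity), ← Real.rpow_mul hts.le, ← Real.rpow_mul hts.le,
      ← Real.rpow_add hts, ← inv_div, Real.inv_rpow hst.le, ← Real.rpow_neg hst.le]
    congr 3
    ring
  rw [setLIntegral_congr_fun measurableSet_Ioc integrand_eq, lintegral_Ioc_div_rpow ht hβ]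
    at holder
  calc ((ENNReal.ofReal t)⁻¹ * ∫⁻ s in Ioc 0 t, f s * ENNReal.ofReal ((t / s) ^ α)) ^ p
      ≤ ENNReal.ofReal t⁻¹ ^ p *
          ((∫⁻ s in Ioc 0 t, f s ^ p * ENNReal.ofReal ((s / t) ^ (β * (p - 1) - α * p))) *
            ENNReal.ofReal (t / (1 - β)) ^ (p - 1)) := by
        rw [ENNReal.mul_rpow_of_nonneg _ _ hp0.le, ENNReal.ofReal_inv_of_pos ht]
        gcongr
    _ = ENNReal.ofReal ((1 - β) ^ (1 - p)) * (ENNReal.ofReal t⁻¹ *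
          ∫⁻ s in Ioc 0 t, f s ^ p * ENNReal.ofReal ((s / t) ^ (β * (p - 1) - α * p))) := by
        have hconst : t⁻¹ ^ p * (t / (1 - β)) ^ (p - 1) = (1 - β) ^ (1 - p) * t⁻¹ := by
          have htp : 0 < t ^ p := by positivity
          have hβp : 0 < (1 - β) ^ (p - 1) := Real.rpow_pos_of_pos (by linarith) _
          rw [Real.div_rpow ht.le (by linarith), Real.inv_rpow ht.le, Real.rpow_sub_one ht.ne',
            show 1 - p = -(p - 1) by ring, Real.rpow_neg (by linarith)]
          field_simp
        rw [ENNReal.ofReal_rpow_of_pos (inv_pos.2 ht),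
          ENNReal.ofReal_rpow_of_pos (div_pos ht (by linarith)), mul_comm (∫⁻ _ in _, _),
          ← mul_assoc, ← ENNReal.ofReal_mul (by positivity), hconst,
          ENNReal.ofReal_mul (Real.rpow_nonneg (by linarith) _), mul_assoc]
    _ = _ := by
        rw [← lintegral_const_mul _ (by fun_prop)]
        simp only [← mul_assoc, mul_comm (ENNReal.ofReal t⁻¹),
          ENNReal.ofReal_mul (inv_nonneg.2 ht.le)]

theorem lintegral_Ioc_lintegral_Ioc_le_lintegral_Ioi {T : ℝ} {g : ℝ → ℝ → ℝ≥0∞}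
    (hg : Measurable (Function.uncurry g)) :
    ∫⁻ t in Ioc 0 T, ∫⁻ s in Ioc 0 t, g t s ≤ ∫⁻ s in Ioc 0 T, ∫⁻ t in Ioi s, g t s := by
  set h : ℝ → ℝ → ℝ≥0∞ := fun t s => (Ici s).indicator (fun t => g t s) t
  have hh : Measurable (Function.uncurry h) :=
    hg.indicator (measurableSet_le measurable_snd measurable_fst)
  have inner_eq : ∀ t ∈ Ioc (0 : ℝ) T, ∫⁻ s in Ioc 0 t, g t s = ∫⁻ s in Ioc 0 T, h t s := by
    intro t ht
    have : h t = (Iic t).indicator (g t) := by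
      ext s
      simp only [h, indicator, mem_Ici, mem_Iic]
    rw [this, lintegral_indicator measurableSet_Iic, Measure.restrict_restrict measurableSet_Iic,
      inter_comm, Ioc_inter_Iic, min_eq_right ht.2]
  calc ∫⁻ t in Ioc 0 T, ∫⁻ s in Ioc 0 t, g t s
      = ∫⁻ t in Ioc 0 T, ∫⁻ s in Ioc 0 T, h t s := setLIntegral_congr_fun measurableSet_Ioc inner_eq
    _ = ∫⁻ s in Ioc 0 T, ∫⁻ t in Ioc 0 T, h t s := lintegral_lintegral_swap hh.aemeasurable
    _ ≤ ∫⁻ s in Ioc 0 T, ∫⁻ t in Ici s, g t s := by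
      refine lintegral_mono fun s => ?_
      rw [lintegral_indicator measurableSet_Ici, Measure.restrict_restrict measurableSet_Ici]
      exact lintegral_mono_set inter_subset_left
    _ = ∫⁻ s in Ioc 0 T, ∫⁻ t in Ioi s, g t s := by
      simp only [setLIntegral_congr Ioi_ae_eq_Ici]

theorem lintegral_Ioc_hardy_le {p α β T : ℝ} (hp : 1 < p) (hβ : β < 1)
    (hαβ : α * p < β * (p - 1)) {f : ℝ → ℝ≥0∞} (hf : Measurable f) :
    ∫⁻ t in Ioc 0 T,
        ((ENNReal.ofReal t)⁻¹ * ∫⁻ s in Ioc 0 t, f s * ENNReal.ofReal ((t / s) ^ α)) ^ p ≤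
      ENNReal.ofReal ((1 - β) ^ (1 - p) / (β * (p - 1) - α * p)) * ∫⁻ s in Ioc 0 T, f s ^ p := by
  set γ := β * (p - 1) - α * p
  have hγ : 0 < γ := sub_pos.2 hαβ
  calc ∫⁻ t in Ioc 0 T,
        ((ENNReal.ofReal t)⁻¹ * ∫⁻ s in Ioc 0 t, f s * ENNReal.ofReal ((t / s) ^ α)) ^ p
      ≤ ∫⁻ t in Ioc 0 T, ENNReal.ofReal ((1 - β) ^ (1 - p)) *
          ∫⁻ s in Ioc 0 t, f s ^ p * ENNReal.ofReal (t⁻¹ * (s / t) ^ γ) :=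
        setLIntegral_mono' measurableSet_Ioc fun t ht => inv_mul_lintegral_Ioc_rpow_le hp hβ ht.1 hf
    _ = ENNReal.ofReal ((1 - β) ^ (1 - p)) *
          ∫⁻ t in Ioc 0 T, ∫⁻ s in Ioc 0 t, f s ^ p * ENNReal.ofReal (t⁻¹ * (s / t) ^ γ) :=
        lintegral_const_mul' _ _ ENNReal.ofReal_ne_top
    _ ≤ ENNReal.ofReal ((1 - β) ^ (1 - p)) *
          ∫⁻ s in Ioc 0 T, ∫⁻ t in Ioi s, f s ^ p * ENNReal.ofReal (t⁻¹ * (s / t) ^ γ) := by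
        refine mul_le_mul_right (lintegral_Ioc_lintegral_Ioc_le_lintegral_Ioi ?_) _
        change Measurable fun q : ℝ × ℝ => f q.2 ^ p * ENNReal.ofReal (q.1⁻¹ * (q.2 / q.1) ^ γ)
        fun_prop
    _ = ENNReal.ofReal ((1 - β) ^ (1 - p)) * ∫⁻ s in Ioc 0 T, f s ^ p * ENNReal.ofReal γ⁻¹ := by
        congr 1
        refine setLIntegral_congr_fun measurableSet_Ioc fun s hs => ?_
        rw [lintegral_const_mul _ (by fun_prop), lintegral_Ioi_inv_mul_div_rpow hs.1 hγ]
    _ = _ := by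
        rw [lintegral_mul_const' _ _ ENNReal.ofReal_ne_top, div_eq_mul_inv,
          ENNReal.ofReal_mul (Real.rpow_nonneg (by linarith) _)]
        ring

theorem Real.exp_mul_sqrt_abs_log_le {A ε x : ℝ} (hε : 0 < ε) (hx : 1 ≤ x) :
    Real.exp (A * √|Real.log x|) ≤ Real.exp (A ^ 2 / (4 * ε)) * x ^ ε := by
  have hlog : 0 ≤ Real.log x := Real.log_nonneg hx
  have amgm : A * √(Real.log x) ≤ A ^ 2 / (4 * ε) + Real.log x * ε := by
    have hsq : Real.log x * ε * (4 * ε) = (2 * ε * √(Real.log x)) ^ 2 := by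
      rw [mul_pow, Real.sq_sqrt hlog]
      ring
    rw [div_add' _ _ _ (by positivity), le_div_iff₀ (by positivity), hsq]
    nlinarith [sq_nonneg (A - 2 * ε * √(Real.log x))]
  rw [abs_of_nonneg hlog, Real.rpow_def_of_pos (by linarith), ← Real.exp_add]
  exact Real.exp_le_exp.2 amgm

theorem lintegral_Ioc_mul_exp_sqrt_abs_log_le {A ε t : ℝ} (hε : 0 < ε) (f : ℝ → ℝ≥0∞) :
    ∫⁻ s in Ioc 0 t, f s * ENNReal.ofReal (Real.exp (A * √|Real.log (t / s)|)) ≤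
      ENNReal.ofReal (Real.exp (A ^ 2 / (4 * ε))) *
        ∫⁻ s in Ioc 0 t, f s * ENNReal.ofReal ((t / s) ^ ε) := by
  rw [← lintegral_const_mul' _ _ ENNReal.ofReal_ne_top]
  refine setLIntegral_mono' measurableSet_Ioc fun s hs => ?_
  rw [mul_left_comm, ← ENNReal.ofReal_mul (Real.exp_nonneg _)]
  gcongr
  exact Real.exp_mul_sqrt_abs_log_le hε ((one_le_div hs.1).2 hs.2)

theorem lintegral_Ioc_exp_sqrt_abs_log_kernel_le {A p ε β T : ℝ} (hp : 1 < p) (hε : 0 < ε)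
    (hβ : β < 1) (hεβ : ε * p < β * (p - 1)) {f : ℝ → ℝ≥0∞} (hf : Measurable f) :
    ∫⁻ t in Ioc 0 T, ((ENNReal.ofReal t)⁻¹ *
        ∫⁻ s in Ioc 0 t, f s * ENNReal.ofReal (Real.exp (A * √|Real.log (t / s)|))) ^ p ≤
      ENNReal.ofReal (Real.exp (A ^ 2 / (4 * ε))) ^ p *
        ENNReal.ofReal ((1 - β) ^ (1 - p) / (β * (p - 1) - ε * p)) *
          ∫⁻ s in Ioc 0 T, f s ^ p := by
  have hp0 : 0 ≤ p := zero_le_one.trans hp.le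
  calc _ ≤ ∫⁻ t in Ioc 0 T, ENNReal.ofReal (Real.exp (A ^ 2 / (4 * ε))) ^ p *
          ((ENNReal.ofReal t)⁻¹ * ∫⁻ s in Ioc 0 t, f s * ENNReal.ofReal ((t / s) ^ ε)) ^ p := by
        refine lintegral_mono fun t => ?_
        rw [← ENNReal.mul_rpow_of_nonneg _ _ hp0, mul_left_comm]
        gcongr
        exact lintegral_Ioc_mul_exp_sqrt_abs_log_le hε f
    _ ≤ _ := by
        rw [lintegral_const_mul' _ _ (ENNReal.rpow_ne_top_of_nonneg hp0 ENNReal.ofReal_ne_top),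
          mul_assoc]
        gcongr
        exact lintegral_Ioc_hardy_le hp hβ hεβ hf

theorem stmt12_general (A : ℝ) :
    ∃ C > (0:ℝ), ∀ (T : ℝ) (f : ℝ → ℝ≥0∞), 0 < T → Measurable f →
      (∫⁻ t in Ioc (0:ℝ) T, (f t) ^ 4) < ⊤ →
      (∫⁻ t in Ioc (0:ℝ) T,
          ((ENNReal.ofReal t)⁻¹ *
            ∫⁻ s in Ioc (0:ℝ) t,
              f s * ENNReal.ofReal (Real.exp (A * Real.sqrt |Real.log (t / s)|))) ^ 4)
          < ⊤ ∧
      (∫⁻ t in Ioc (0:ℝ) T,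
          ((ENNReal.ofReal t)⁻¹ *
            ∫⁻ s in Ioc (0:ℝ) t,
              f s * ENNReal.ofReal (Real.exp (A * Real.sqrt |Real.log (t / s)|))) ^ 4)
        ≤ ENNReal.ofReal C ^ 4 * ∫⁻ t in Ioc (0:ℝ) T, (f t) ^ 4 := by
  refine ⟨3 / 2 * Real.exp (A ^ 2 / (4 * (1 / 12))), by positivity, fun T f _ hf hfin => ?_⟩
  have bound := lintegral_Ioc_exp_sqrt_abs_log_kernel_le (A := A) (p := 4) (ε := 1 / 12)
    (β := 1 / 3) (T := T) (by norm_num) (by norm_num) (by norm_num) (by norm_num) hf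
  have hardy_const : ((1:ℝ) - 1 / 3) ^ ((1:ℝ) - 4) / (1 / 3 * (4 - 1) - 1 / 12 * 4)
      = (3 / 2) ^ 4 := by
    rw [show (1:ℝ) - 4 = -(3:ℕ) by norm_num, Real.rpow_neg (by norm_num), Real.rpow_natCast]
    norm_num
  simp only [hardy_const, ENNReal.rpow_ofNat, ENNReal.ofReal_pow (by norm_num : (0:ℝ) ≤ 3 / 2)]
    at bound
  rw [ENNReal.ofReal_mul (by norm_num), mul_pow, mul_comm (ENNReal.ofReal (3 / 2) ^ 4)]
  exact ⟨bound.trans_lt (ENNReal.mul_lt_top (by finiteness) hfin), bound⟩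

theorem stmt12 (A : ℝ) (hA : 0 < A) :
    ∃ C > (0:ℝ), ∀ (T : ℝ) (f : ℝ → ℝ≥0∞), 0 < T → Measurable f →
      (∫⁻ t in Ioc (0:ℝ) T, (f t) ^ 4) < ⊤ →
      (∫⁻ t in Ioc (0:ℝ) T,
          ((ENNReal.ofReal t)⁻¹ *
            ∫⁻ s in Ioc (0:ℝ) t,
              f s * ENNReal.ofReal (Real.exp (A * Real.sqrt |Real.log (t / s)|))) ^ 4)
          < ⊤ ∧
      (∫⁻ t in Ioc (0:ℝ) T,
          ((ENNReal.ofReal t)⁻¹ *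
            ∫⁻ s in Ioc (0:ℝ) t,
              f s * ENNReal.ofReal (Real.exp (A * Real.sqrt |Real.log (t / s)|))) ^ 4)
        ≤ ENNReal.ofReal C ^ 4 * ∫⁻ t in Ioc (0:ℝ) T, (f t) ^ 4 :=
  stmt12_general A
end

section
/- There is a universal constant C such that: for every C² function f on 𝕋 × ℝ with zero horizontal average (i.e. ∫_𝕋 f(x₁,x₂) dx₁ = 0 for every x₂ ∈ ℝ) and with ∂₁f, ∂₁∂₂f ∈ L²(𝕋 × ℝ), one has the anisotropic Agmon-type inequality ‖f‖_{L^∞(𝕋×ℝ)} ≤ C ‖∂₁f‖_{L²(𝕋×ℝ)}^{1/2} ‖∂₁∂₂f‖_{L²(𝕋×ℝ)}^{1/2}. -/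
/-!
For fixed `x₂`, `f(·, x₂)` has mean zero on `𝕋`, so `|f(x₁, x₂)|² ≤ G(x₂) := ∫_𝕋 |∂₁f(t, x₂)|² dt`.
By Fubini `G` is integrable on `ℝ`, and so is `G' = 2 ∫_𝕋 ∂₁f · ∂₂∂₁f`; hence `G` vanishes at
infinity and `G(x₂) ≤ ∫_ℝ |G'| ≤ 2 ‖∂₁f‖₂ ‖∂₁∂₂f‖₂` by Cauchy–Schwarz, using `∂₂∂₁f = ∂₁∂₂f`.
This gives the inequality with `C = √2`.
-/

noncomputable section

open MeasureTheory Set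
open scoped ENNReal

abbrev Pt : Type := ℝ × ℝ

/-- partial derivative in the first (torus) variable -/
def pd1 (f : Pt → ℝ) (x : Pt) : ℝ := deriv (fun s => f (s, x.2)) x.1

/-- partial derivative in the second (real) variable -/
def pd2 (f : Pt → ℝ) (x : Pt) : ℝ := deriv (fun s => f (x.1, s)) x.2

/-- 1-periodicity in the first variable: represents functions on 𝕋 × ℝ, 𝕋 = ℝ/ℤ -/
def Per (f : Pt → ℝ) : Prop := ∀ x : Pt, f (x.1 + 1, x.2) = f x

/-- the measure representing 𝕋 × ℝ -/
def μΩ : Measure Pt := volume.restrict (Set.Ico (0:ℝ) 1 ×ˢ Set.univ)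

open Filter Topology

section PartialDerivatives

variable {g : Pt → ℝ}

lemma HasFDerivAt.hasDerivAt_pd1 {g' : Pt →L[ℝ] ℝ} {x : Pt} (hg : HasFDerivAt g g' x) :
    HasDerivAt (fun s => g (s, x.2)) (g' (1, 0)) x.1 :=
  hg.comp_hasDerivAt_of_eq x.1 ((hasDerivAt_id _).prodMk (hasDerivAt_const _ _)) rfl

lemma HasFDerivAt.hasDerivAt_pd2 {g' : Pt →L[ℝ] ℝ} {x : Pt} (hg : HasFDerivAt g g' x) :
    HasDerivAt (fun s => g (x.1, s)) (g' (0, 1)) x.2 :=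
  hg.comp_hasDerivAt_of_eq x.2 ((hasDerivAt_const _ _).prodMk (hasDerivAt_id _)) rfl

lemma DifferentiableAt.hasDerivAt_pd1 {x : Pt} (hg : DifferentiableAt ℝ g x) :
    HasDerivAt (fun s => g (s, x.2)) (pd1 g x) x.1 :=
  hg.hasFDerivAt.hasDerivAt_pd1.differentiableAt.hasDerivAt

lemma DifferentiableAt.hasDerivAt_pd2 {x : Pt} (hg : DifferentiableAt ℝ g x) :
    HasDerivAt (fun s => g (x.1, s)) (pd2 g x) x.2 :=
  hg.hasFDerivAt.hasDerivAt_pd2.differentiableAt.hasDerivAt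

lemma pd1_eq_fderiv (hg : Differentiable ℝ g) : pd1 g = fun x => fderiv ℝ g x (1, 0) :=
  funext fun x => (hg x).hasFDerivAt.hasDerivAt_pd1.deriv

lemma pd2_eq_fderiv (hg : Differentiable ℝ g) : pd2 g = fun x => fderiv ℝ g x (0, 1) :=
  funext fun x => (hg x).hasFDerivAt.hasDerivAt_pd2.deriv

lemma ContDiff.pd1 {m n : WithTop ℕ∞} (hg : ContDiff ℝ n g) (hmn : m + 1 ≤ n) :
    ContDiff ℝ m (pd1 g) := by
  rw [pd1_eq_fderiv ((hg.of_le (le_add_self.trans hmn)).differentiable one_ne_zero)]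
  exact (hg.fderiv_right hmn).clm_apply contDiff_const

lemma ContDiff.pd2 {m n : WithTop ℕ∞} (hg : ContDiff ℝ n g) (hmn : m + 1 ≤ n) :
    ContDiff ℝ m (pd2 g) := by
  rw [pd2_eq_fderiv ((hg.of_le (le_add_self.trans hmn)).differentiable one_ne_zero)]
  exact (hg.fderiv_right hmn).clm_apply contDiff_const

lemma pd2_pd1_comm (hg : ContDiff ℝ 2 g) : pd2 (pd1 g) = pd1 (pd2 g) := by
  have hg1 := hg.differentiable two_ne_zero
  have hdg : Differentiable ℝ (fderiv ℝ g) :=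
    (hg.fderiv_right (m := 1) (by norm_num)).differentiable one_ne_zero
  rw [pd2_eq_fderiv ((hg.pd1 (m := 1) (by norm_num)).differentiable one_ne_zero),
    pd1_eq_fderiv ((hg.pd2 (m := 1) (by norm_num)).differentiable one_ne_zero),
    pd1_eq_fderiv hg1, pd2_eq_fderiv hg1]
  funext x
  rw [fderiv_clm_apply (hdg x) (differentiableAt_const _),
    fderiv_clm_apply (hdg x) (differentiableAt_const _)]
  simp only [fderiv_fun_const, Pi.zero_apply, ContinuousLinearMap.comp_zero, zero_add,
    ContinuousLinearMap.flip_apply]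
  exact ((hg.contDiffAt).isSymmSndFDerivAt (by simp)) _ _

end PartialDerivatives

lemma MeasureTheory.MemLp.eLpNorm_two_eq_ofReal_sqrt {α : Type*} [MeasurableSpace α]
    {μ : Measure α} {g : α → ℝ} (hg : MemLp g 2 μ) :
    eLpNorm g 2 μ = ENNReal.ofReal √(∫ a, g a ^ 2 ∂μ) := by
  rw [hg.eLpNorm_eq_integral_rpow_norm two_ne_zero ENNReal.ofNat_ne_top]
  simp [Real.sqrt_eq_rpow]

lemma integral_abs_mul_le_sqrt_mul_sqrt {α : Type*} [MeasurableSpace α] {μ : Measure α}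
    {f g : α → ℝ} (hf : MemLp f 2 μ) (hg : MemLp g 2 μ) :
    ∫ a, |f a| * |g a| ∂μ ≤ √(∫ a, f a ^ 2 ∂μ) * √(∫ a, g a ^ 2 ∂μ) := by
  have h := integral_mul_le_Lp_mul_Lq_of_nonneg Real.HolderConjugate.two_two
    (ae_of_all μ fun a => abs_nonneg (f a)) (ae_of_all μ fun a => abs_nonneg (g a))
    (by rw [ENNReal.ofReal_ofNat]; exact hf.abs) (by rw [ENNReal.ofReal_ofNat]; exact hg.abs)
  simpa only [Real.rpow_two, sq_abs, ← Real.sqrt_eq_rpow] using h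

lemma norm_le_integral_norm_deriv_of_integrable {E : Type*} [NormedAddCommGroup E]
    [NormedSpace ℝ E] [CompleteSpace E] {G G' : ℝ → E} (hderiv : ∀ x, HasDerivAt G (G' x) x)
    (hG : Integrable G) (hG' : Integrable G') (y : ℝ) :
    ‖G y‖ ≤ ∫ x, ‖G' x‖ := by
  have hlim : Tendsto G atTop (𝓝 0) :=
    tendsto_zero_of_hasDerivAt_of_integrableOn_Ioi (a := y) (fun x _ => hderiv x)
      hG'.integrableOn hG.integrableOn
  have hG_eq : ∫ x in Ioi y, G' x = -G y := by
    rw [integral_Ioi_of_hasDerivAt_of_tendsto' (fun x _ => hderiv x) hG'.integrableOn hlim,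
      zero_sub]
  calc ‖G y‖ = ‖∫ x in Ioi y, G' x‖ := by rw [hG_eq, norm_neg]
    _ ≤ ∫ x in Ioi y, ‖G' x‖ := norm_integral_le_integral_norm _
    _ ≤ ∫ x, ‖G' x‖ := setIntegral_le_integral hG'.norm (ae_of_all _ fun _ => norm_nonneg _)

lemma hasDerivAt_setIntegral_of_continuous {E : Type*} [NormedAddCommGroup E] [NormedSpace ℝ E]
    {F F' : ℝ → ℝ → E} {K : Set ℝ} (hK : IsCompact K) (hF : Continuous F.uncurry)
    (hF' : Continuous F'.uncurry) (hderiv : ∀ x t, HasDerivAt (F · t) (F' x t) x) (x₀ : ℝ) :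
    HasDerivAt (fun x => ∫ t in K, F x t) (∫ t in K, F' x₀ t) x₀ := by
  obtain ⟨M, hM⟩ := ((isCompact_closedBall x₀ 1).prod hK).exists_bound_of_continuousOn
    hF'.continuousOn
  have : IsFiniteMeasure (volume.restrict K) := isFiniteMeasure_restrict.2 hK.measure_ne_top
  refine (hasDerivAt_integral_of_dominated_loc_of_deriv_le (bound := fun _ => M)
    (Metric.closedBall_mem_nhds x₀ one_pos)
    (Eventually.of_forall fun x => (hF.comp (Continuous.prodMk_right x)).aestronglyMeasurable)
    ?_ (hF'.comp (Continuous.prodMk_right x₀)).aestronglyMeasurable ?_ (integrable_const M)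
    (ae_of_all _ fun t x _ => hderiv x t)).2
  · exact (hF.comp (Continuous.prodMk_right x₀)).continuousOn.integrableOn_compact hK
  · exact (ae_restrict_iff' hK.measurableSet).2
      (ae_of_all _ fun t ht x hx => hM (x, t) ⟨hx, ht⟩)

lemma sq_le_setIntegral_sq_deriv_of_intervalIntegral_eq_zero {g g' : ℝ → ℝ}
    (hderiv : ∀ t, HasDerivAt g (g' t) t) (hg' : Continuous g')
    (hmean : ∫ t in (0:ℝ)..1, g t = 0) {x : ℝ} (hx : x ∈ Icc (0:ℝ) 1) :
    g x ^ 2 ≤ ∫ t in Icc (0:ℝ) 1, g' t ^ 2 := by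
  have hg : Continuous g := continuous_iff_continuousAt.2 fun t => (hderiv t).continuousAt
  set L := ∫ t in Icc (0:ℝ) 1, |g' t|
  have hosc : ∀ s ∈ Icc (0:ℝ) 1, |g x - g s| ≤ L := by
    intro s hs
    rw [← intervalIntegral.integral_eq_sub_of_hasDerivAt (fun t _ => hderiv t)
      (hg'.intervalIntegrable s x)]
    refine (intervalIntegral.norm_integral_le_integral_norm_uIoc (f := g')).trans ?_
    exact setIntegral_mono_set hg'.abs.integrableOn_Icc (ae_of_all _ fun _ => abs_nonneg _)
      (uIoc_subset_uIcc.trans (uIcc_subset_Icc hs hx)).eventuallyLE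
  have hg_le : |g x| ≤ L := by
    have hg_eq : g x = ∫ s in (0:ℝ)..1, (g x - g s) := by
      rw [intervalIntegral.integral_sub intervalIntegrable_const (hg.intervalIntegrable 0 1),
        hmean]
      simp
    rw [hg_eq]
    simpa using intervalIntegral.norm_integral_le_of_norm_le_const (C := L)
      (f := fun s => g x - g s) fun s hs =>
        hosc s (uIoc_subset_uIcc.trans (uIcc_of_le zero_le_one).subset hs)
  have hL : L ≤ √(∫ t in Icc (0:ℝ) 1, g' t ^ 2) := by
    have hg'2 : MemLp g' 2 (volume.restrict (Icc (0:ℝ) 1)) :=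
      (memLp_two_iff_integrable_sq hg'.aestronglyMeasurable).2 (hg'.pow 2).integrableOn_Icc
    simpa using integral_abs_mul_le_sqrt_mul_sqrt hg'2 (memLp_const 1)
  calc g x ^ 2 = |g x| ^ 2 := (sq_abs _).symm
    _ ≤ √(∫ t in Icc (0:ℝ) 1, g' t ^ 2) ^ 2 := pow_le_pow_left₀ (abs_nonneg _) (hg_le.trans hL) 2
    _ = ∫ t in Icc (0:ℝ) 1, g' t ^ 2 := Real.sq_sqrt (integral_nonneg fun _ => sq_nonneg _)

lemma muOmega_eq_prod : μΩ = (volume.restrict (Icc (0:ℝ) 1)).prod volume := by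
  rw [μΩ, Measure.volume_eq_prod, ← Measure.prod_restrict, Measure.restrict_univ,
    Measure.restrict_congr_set Ico_ae_eq_Icc]

lemma setIntegral_sq_slice_le {u : Pt → ℝ} (hu : ContDiff ℝ 1 u) (hu2 : MemLp u 2 μΩ)
    (hv2 : MemLp (pd2 u) 2 μΩ) (y : ℝ) :
    ∫ t in Icc (0:ℝ) 1, u (t, y) ^ 2
      ≤ 2 * √(∫ z, u z ^ 2 ∂μΩ) * √(∫ z, pd2 u z ^ 2 ∂μΩ) := by
  set v := pd2 u
  have hv : Continuous v := (hu.pd2 (zero_add _).le).continuous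
  have hderiv : ∀ s t, HasDerivAt (fun s => u (t, s) ^ 2) (2 * u (t, s) * v (t, s)) s := by
    intro s t
    have h : HasDerivAt (fun s => u (t, s)) (v (t, s)) s :=
      (hu.differentiable one_ne_zero (t, s)).hasDerivAt_pd2
    exact (h.fun_pow 2).congr_deriv (by simp only [v]; ring)
  set G := fun s => ∫ t in Icc (0:ℝ) 1, u (t, s) ^ 2
  set H := fun s => ∫ t in Icc (0:ℝ) 1, 2 * u (t, s) * v (t, s)
  have hG : ∀ s, HasDerivAt G (H s) s := hasDerivAt_setIntegral_of_continuous isCompact_Icc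
    (by fun_prop) (by fun_prop) hderiv
  rw [muOmega_eq_prod] at hu2 hv2 ⊢
  set μ := (volume.restrict (Icc (0:ℝ) 1)).prod (volume : Measure ℝ)
  have huv : Integrable (fun z => 2 * u z * v z) μ := by
    simpa [mul_assoc] using (hu2.integrable_mul hv2).const_mul 2
  calc G y ≤ ∫ s, |H s| := (le_abs_self _).trans <| by
        simpa using norm_le_integral_norm_deriv_of_integrable hG
          hu2.integrable_sq.integral_prod_right huv.integral_prod_right y
    _ ≤ ∫ s, ∫ t in Icc (0:ℝ) 1, |2 * u (t, s) * v (t, s)| :=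
        integral_mono huv.integral_prod_right.abs huv.abs.integral_prod_right
          fun s => abs_integral_le_integral_abs
    _ = 2 * ∫ z, |u z| * |v z| ∂μ := by
        rw [← integral_prod_symm _ huv.abs, ← integral_const_mul]
        simp [μ, abs_mul, mul_assoc]
    _ ≤ 2 * (√(∫ z, u z ^ 2 ∂μ) * √(∫ z, v z ^ 2 ∂μ)) :=
        mul_le_mul_of_nonneg_left (integral_abs_mul_le_sqrt_mul_sqrt hu2 hv2) zero_le_two
    _ = _ := by ring

lemma sq_le_of_intervalIntegral_eq_zero {f : Pt → ℝ} (hf : ContDiff ℝ 2 f)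
    (hmean : ∀ y : ℝ, ∫ s in (0:ℝ)..1, f (s, y) = 0) (hu : MemLp (pd1 f) 2 μΩ)
    (hv : MemLp (pd2 (pd1 f)) 2 μΩ) {x : ℝ} (hx : x ∈ Icc (0:ℝ) 1) (y : ℝ) :
    f (x, y) ^ 2 ≤ 2 * √(∫ z, pd1 f z ^ 2 ∂μΩ) * √(∫ z, pd2 (pd1 f) z ^ 2 ∂μΩ) :=
  (sq_le_setIntegral_sq_deriv_of_intervalIntegral_eq_zero
    (fun t => (hf.differentiable two_ne_zero (t, y)).hasDerivAt_pd1)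
    ((hf.pd1 (m := 0) (by norm_num)).continuous.comp (Continuous.prodMk_left y)) (hmean y)
    hx).trans (setIntegral_sq_slice_le (hf.pd1 (by norm_num)) hu hv y)

theorem stmt16 :
    ∃ C > (0:ℝ), ∀ f : Pt → ℝ, ContDiff ℝ 2 f → Per f →
      (∀ y : ℝ, (∫ s in (0:ℝ)..1, f (s, y)) = 0) →
      MemLp (fun x => pd1 f x) 2 μΩ →
      MemLp (fun x => pd1 (fun z => pd2 f z) x) 2 μΩ →
      eLpNorm f ⊤ μΩ ≤ ENNReal.ofReal C
        * eLpNorm (fun x => pd1 f x) 2 μΩ ^ (1/2 : ℝ)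
        * eLpNorm (fun x => pd1 (fun z => pd2 f z) x) 2 μΩ ^ (1/2 : ℝ) := by
  refine ⟨√2, by positivity, fun f hf _ hmean hu hv => ?_⟩
  have hv' : MemLp (pd2 (pd1 f)) 2 μΩ := by rw [pd2_pd1_comm hf]; exact hv
  set A := ∫ z, pd1 f z ^ 2 ∂μΩ
  set B := ∫ z, pd2 (pd1 f) z ^ 2 ∂μΩ
  have hbound : ∀ z ∈ Ico (0:ℝ) 1 ×ˢ univ, ‖f z‖ ≤ √(2 * √A * √B) := by
    rintro ⟨x, y⟩ ⟨hx, -⟩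
    rw [Real.norm_eq_abs, ← Real.sqrt_sq_eq_abs]
    exact Real.sqrt_le_sqrt
      (sq_le_of_intervalIntegral_eq_zero hf hmean hu hv' (Ico_subset_Icc_self hx) y)
  have hsup : eLpNorm f ⊤ μΩ ≤ ENNReal.ofReal √(2 * √A * √B) := by
    rw [eLpNorm_exponent_top]
    refine eLpNormEssSup_le_of_ae_bound ?_
    rw [μΩ]
    exact (ae_restrict_iff' (measurableSet_Ico.prod MeasurableSet.univ)).2 (ae_of_all _ hbound)
  have hv_eq : (fun x => pd1 (fun z => pd2 f z) x) = pd2 (pd1 f) := (pd2_pd1_comm hf).symm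
  rw [hv_eq, hu.eLpNorm_two_eq_ofReal_sqrt, hv'.eLpNorm_two_eq_ofReal_sqrt,
    ENNReal.ofReal_rpow_of_nonneg (Real.sqrt_nonneg _) (by norm_num),
    ENNReal.ofReal_rpow_of_nonneg (Real.sqrt_nonneg _) (by norm_num),
    ← ENNReal.ofReal_mul (by positivity), ← ENNReal.ofReal_mul (by positivity),
    ← Real.sqrt_eq_rpow, ← Real.sqrt_eq_rpow, ← Real.sqrt_mul zero_le_two,
    ← Real.sqrt_mul (by positivity)]
  exact hsup
end
end
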